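/- Let n be a positive natural number, let Φ₁, …, Φ_N be bare measurement channels on n×n complex matrices, let Φ = Φ_N ∘ ⋯ ∘ Φ₁, and let Φ* denote the adjoint of Φ with respect to the Hilbert–Schmidt inner product (i.e. Tr(A† Φ(B)) = Tr(Φ*(A)† B) for all A, B). Then there is no invertible complex-linear map 𝒰 on n×n complex matrices such that 𝒰 ∘ Φ* = (−Φ) ∘ 𝒰. (In other words, bare measurement feedback processes are incompatible with Q symmetry with ε_Q = −1.) -/

import Mathlib

/-!
Each bare measurement channel `T ρ = ∑ √E ρ √E` is, for the Hilbert–Schmidt inner product, a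
self-adjoint operator with `0 ≤ T ≤ 1`. Such an operator can only preserve the norm of a vector
that it fixes, a property that survives composition; hence `Φ y = -y` forces `y = 0`.
Since `Φ` preserves traces, `Φ* 1 = 1`, so `𝒰 ∘ Φ* = -Φ ∘ 𝒰` gives `Φ (𝒰 1) = -𝒰 1`,
whence `𝒰 1 = 0`, contradicting injectivity.
-/

open Matrix
open scoped ComplexOrder

/-- The square root of a positive semidefinite matrix, as `Matrix.PosSemidef.sqrt` was defined
in the older Mathlib (removed since). -/
noncomputable def Matrix.PosSemidef.sqrt {n : Type*} [Fintype n] [DecidableEq n] {A : Matrix n n ℂ}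
    (hA : A.PosSemidef) : Matrix n n ℂ :=
  (hA.1.eigenvectorUnitary : Matrix n n ℂ) * diagonal ((↑) ∘ Real.sqrt ∘ hA.1.eigenvalues) *
    (star hA.1.eigenvectorUnitary : Matrix n n ℂ)

/-- A bare measurement channel: `Φ(ρ) = Σ_α √E_α ρ √E_α` for some POVM `(E_α)`. -/
def IsBareChannel {n : ℕ}
    (Φ : Matrix (Fin n) (Fin n) ℂ → Matrix (Fin n) (Fin n) ℂ) : Prop :=
  ∃ (k : ℕ) (E : Fin k → Matrix (Fin n) (Fin n) ℂ)
    (hE : ∀ α, (E α).PosSemidef),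
      (∑ α, E α) = 1 ∧ ∀ ρ, Φ ρ = ∑ α, (hE α).sqrt * ρ * (hE α).sqrt

open scoped InnerProductSpace

section RigidContraction

variable {E : Type*} [NormedAddCommGroup E]

structure IsRigidContraction (f : E → E) : Prop where
  norm_apply_le : ∀ x, ‖f x‖ ≤ ‖x‖
  apply_eq_self_of_norm_apply_eq : ∀ x, ‖f x‖ = ‖x‖ → f x = x

namespace IsRigidContraction

lemma id : IsRigidContraction (id : E → E) := ⟨fun _ => le_rfl, fun _ _ => rfl⟩

lemma comp {f g : E → E} (hg : IsRigidContraction g) (hf : IsRigidContraction f) :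
    IsRigidContraction (g ∘ f) where
  norm_apply_le x := (hg.norm_apply_le (f x)).trans (hf.norm_apply_le x)
  apply_eq_self_of_norm_apply_eq x h := by
    have hfx : ‖f x‖ = ‖x‖ := le_antisymm (hf.norm_apply_le x) (h ▸ hg.norm_apply_le (f x))
    rw [Function.comp_apply, hf.apply_eq_self_of_norm_apply_eq x hfx] at h ⊢
    exact hg.apply_eq_self_of_norm_apply_eq x h

lemma eq_zero_of_apply_eq_neg [IsAddTorsionFree E] {f : E → E} (hf : IsRigidContraction f)
    {x : E} (hx : f x = -x) : x = 0 :=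
  self_eq_neg.mp ((hf.apply_eq_self_of_norm_apply_eq x (by rw [hx, norm_neg])).symm.trans hx)

end IsRigidContraction

end RigidContraction

lemma List.foldl_comp_induction {α : Type*} {p : (α → α) → Prop}
    (hcomp : ∀ f g, p f → p g → p (g ∘ f)) :
    ∀ (l : List (α → α)) {f : α → α}, (∀ g ∈ l, p g) → p f → p (l.foldl (fun f g => g ∘ f) f)
  | [], _, _, hf => hf
  | g :: l, _, hl, hf =>
    foldl_comp_induction hcomp l (fun h hh => hl h (mem_cons_of_mem g hh))
      (hcomp _ _ hf (hl g mem_cons_self))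

namespace LinearMap

variable {𝕜 E : Type*} [RCLike 𝕜] [NormedAddCommGroup E] [InnerProductSpace 𝕜 E]
  {T : E →ₗ[𝕜] E}

lemma IsSymmetric.isPositive_comp_self (hT : T.IsSymmetric) : (T ∘ₗ T).IsPositive :=
  ⟨fun x y => by simp only [comp_apply, hT _ y, hT x], fun x => by
    rw [comp_apply, hT]; exact inner_self_nonneg⟩

-- `T - T² = T (1 - T) T + (1 - T) T (1 - T)`, a sum of two positive operators.
lemma norm_apply_sq_le_re_inner (h0 : 0 ≤ T) (h1 : T ≤ 1) (x : E) :
    ‖T x‖ ^ 2 ≤ RCLike.re ⟪T x, x⟫_𝕜 := by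
  rw [nonneg_iff_isPositive] at h0
  rw [le_def] at h1
  have key : RCLike.re ⟪T x, x⟫_𝕜 - ‖T x‖ ^ 2 =
      RCLike.re ⟪T (x - T x), x - T x⟫_𝕜 + RCLike.re ⟪(1 - T) (T x), T x⟫_𝕜 := by
    have hsym : ⟪T (T x), x⟫_𝕜 = ⟪T x, T x⟫_𝕜 := h0.isSymmetric (T x) x
    rw [← inner_self_eq_norm_sq (𝕜 := 𝕜), ← map_sub, ← map_add]
    congr 1
    simp only [map_sub, sub_apply, Module.End.one_apply, inner_sub_left, inner_sub_right, hsym]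
    ring
  linarith [h0.re_inner_nonneg_left (x - T x), h1.re_inner_nonneg_left (T x)]

lemma isRigidContraction_of_nonneg_of_le_one (h0 : 0 ≤ T) (h1 : T ≤ 1) :
    IsRigidContraction T := by
  have hsq := norm_apply_sq_le_re_inner h0 h1
  refine ⟨fun x => ?_, fun x hx => ?_⟩
  · have := (hsq x).trans (re_inner_le_norm (T x) x)
    nlinarith [norm_nonneg (T x), norm_nonneg x]
  · have hsub := norm_sub_sq (𝕜 := 𝕜) (T x) x
    have hTx := hsq x
    rw [hx] at hsub hTx
    rw [← sub_eq_zero, ← norm_eq_zero]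
    nlinarith [norm_nonneg (T x - x)]

end LinearMap

namespace Matrix.PosSemidef

variable {m : Type*} [Fintype m] [DecidableEq m] {A : Matrix m m ℂ}

lemma posSemidef_sqrt (hA : A.PosSemidef) : hA.sqrt.PosSemidef := by
  have hd : (diagonal ((↑) ∘ Real.sqrt ∘ hA.1.eigenvalues : m → ℂ)).PosSemidef :=
    posSemidef_diagonal_iff.mpr fun i => Complex.zero_le_real.mpr (Real.sqrt_nonneg _)
  simpa only [sqrt, star_eq_conjTranspose] using
    hd.mul_mul_conjTranspose_same (hA.1.eigenvectorUnitary : Matrix m m ℂ)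

lemma sqrt_mul_self (hA : A.PosSemidef) : hA.sqrt * hA.sqrt = A := by
  have hD : diagonal ((↑) ∘ Real.sqrt ∘ hA.1.eigenvalues : m → ℂ) *
      diagonal ((↑) ∘ Real.sqrt ∘ hA.1.eigenvalues : m → ℂ) =
      diagonal (RCLike.ofReal ∘ hA.1.eigenvalues) := by
    rw [diagonal_mul_diagonal]
    congr 1 with i
    simp [← Complex.ofReal_mul, Real.mul_self_sqrt (hA.eigenvalues_nonneg i)]
  conv_rhs => rw [hA.1.spectral_theorem, Unitary.conjStarAlgAut_apply]
  rw [← hD]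
  simp only [sqrt, Matrix.mul_assoc]
  rw [← Matrix.mul_assoc (star _ : Matrix m m ℂ) _ _, Unitary.coe_star_mul_self, Matrix.one_mul]

end Matrix.PosSemidef

section KrausMap

variable {m ι : Type*} [Fintype m] [Fintype ι]

def krausMap (K : ι → Matrix m m ℂ) : Matrix m m ℂ →ₗ[ℂ] Matrix m m ℂ :=
  ∑ α, LinearMap.mulLeftRight ℂ (K α, K α)

lemma krausMap_apply (K : ι → Matrix m m ℂ) (ρ : Matrix m m ℂ) :
    krausMap K ρ = ∑ α, K α * ρ * K α := by
  simp [krausMap, LinearMap.mulLeftRight_apply]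

lemma trace_krausMap [DecidableEq m] {K : ι → Matrix m m ℂ} (hK : ∑ α, K α * K α = 1)
    (ρ : Matrix m m ℂ) :
    (krausMap K ρ).trace = ρ.trace := by
  simp only [krausMap_apply, trace_sum]
  conv_rhs => rw [← one_mul ρ, ← hK, Finset.sum_mul, trace_sum]
  exact Finset.sum_congr rfl fun α _ => by rw [trace_mul_cycle, mul_assoc]

end KrausMap

namespace IsBareChannel

variable {n : ℕ} {Φ : Matrix (Fin n) (Fin n) ℂ → Matrix (Fin n) (Fin n) ℂ}

lemma exists_eq_krausMap (hΦ : IsBareChannel Φ) :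
    ∃ (k : ℕ) (K : Fin k → Matrix (Fin n) (Fin n) ℂ),
      (∀ α, (K α).PosSemidef) ∧ ∑ α, K α * K α = 1 ∧ Φ = krausMap K := by
  obtain ⟨k, E, hE, hsum, hΦ⟩ := hΦ
  refine ⟨k, fun α => (hE α).sqrt, fun α => (hE α).posSemidef_sqrt, ?_, ?_⟩
  · simpa only [PosSemidef.sqrt_mul_self] using hsum
  · funext ρ
    rw [hΦ, krausMap_apply]

lemma trace_apply (hΦ : IsBareChannel Φ) (ρ : Matrix (Fin n) (Fin n) ℂ) :
    (Φ ρ).trace = ρ.trace := by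
  obtain ⟨k, K, -, hsum, rfl⟩ := hΦ.exists_eq_krausMap
  exact trace_krausMap hsum ρ

lemma trace_foldl_comp_apply {l : List (Matrix (Fin n) (Fin n) ℂ → Matrix (Fin n) (Fin n) ℂ)}
    (hl : ∀ T ∈ l, IsBareChannel T) (ρ : Matrix (Fin n) (Fin n) ℂ) :
    (l.foldl (fun f g => g ∘ f) id ρ).trace = ρ.trace :=
  List.foldl_comp_induction (p := fun f => ∀ ρ, trace (f ρ) = trace ρ)
    (fun f _ hf hg ρ => (hg (f ρ)).trans (hf ρ)) l (fun T hT => (hl T hT).trace_apply)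
    (fun _ => rfl) ρ

end IsBareChannel

section HilbertSchmidt

variable {m : Type*} [Fintype m] [DecidableEq m]

noncomputable abbrev hilbertSchmidtNormedAddCommGroup : NormedAddCommGroup (Matrix m m ℂ) :=
  toMatrixNormedAddCommGroup 1 PosDef.one

attribute [local instance] hilbertSchmidtNormedAddCommGroup

noncomputable abbrev hilbertSchmidtInnerProductSpace : InnerProductSpace ℂ (Matrix m m ℂ) :=
  toMatrixInnerProductSpace 1 PosSemidef.one

attribute [local instance] hilbertSchmidtInnerProductSpace

lemma inner_eq_trace (A B : Matrix m m ℂ) : ⟪A, B⟫_ℂ = (Aᴴ * B).trace := by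
  change (B * 1 * Aᴴ).trace = _
  rw [mul_one, trace_mul_comm]

lemma isSymmetric_mulLeftRight {A : Matrix m m ℂ} (hA : A.IsHermitian) :
    (LinearMap.mulLeftRight ℂ (A, A)).IsSymmetric := fun x y => by
  simp only [LinearMap.mulLeftRight_apply, inner_eq_trace, conjTranspose_mul, hA.eq, mul_assoc]
  rw [trace_mul_comm A]
  simp only [mul_assoc]

lemma isSymmetric_mulLeft_sub_mulRight {A : Matrix m m ℂ} (hA : A.IsHermitian) :
    (LinearMap.mulLeft ℂ A - LinearMap.mulRight ℂ A).IsSymmetric := fun x y => by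
  simp only [LinearMap.sub_apply, LinearMap.mulLeft_apply, LinearMap.mulRight_apply,
    inner_eq_trace, conjTranspose_sub, conjTranspose_mul, hA.eq, sub_mul, mul_sub, trace_sub,
    mul_assoc]
  rw [trace_mul_comm A]
  simp only [mul_assoc]

lemma mulLeftRight_nonneg {A : Matrix m m ℂ} (hA : A.PosSemidef) :
    0 ≤ LinearMap.mulLeftRight ℂ (A, A) := by
  have hsq : LinearMap.mulLeftRight ℂ (A, A) = LinearMap.mulLeftRight ℂ (hA.sqrt, hA.sqrt) ∘ₗ
      LinearMap.mulLeftRight ℂ (hA.sqrt, hA.sqrt) := by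
    ext1 x
    simp only [LinearMap.comp_apply, LinearMap.mulLeftRight_apply, ← hA.sqrt_mul_self, mul_assoc]
  rw [hsq, LinearMap.nonneg_iff_isPositive]
  exact (isSymmetric_mulLeftRight hA.posSemidef_sqrt.isHermitian).isPositive_comp_self

variable {ι : Type*} [Fintype ι] {K : ι → Matrix m m ℂ}

lemma krausMap_nonneg (hK : ∀ α, (K α).PosSemidef) : 0 ≤ krausMap K :=
  Finset.sum_nonneg fun α _ => mulLeftRight_nonneg (hK α)

-- With `ad K = mulLeft K - mulRight K`: `2 (1 - T) = ∑ (ad K α)²`,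
-- as `(ad K)² ρ = K² ρ - 2 K ρ K + ρ K²`.
lemma krausMap_le_one (hK : ∀ α, (K α).IsHermitian) (hsum : ∑ α, K α * K α = 1) :
    krausMap K ≤ 1 := by
  have hsq : (2 : ℂ) • (1 - krausMap K) = ∑ α,
      (LinearMap.mulLeft ℂ (K α) - LinearMap.mulRight ℂ (K α)) ∘ₗ
        (LinearMap.mulLeft ℂ (K α) - LinearMap.mulRight ℂ (K α)) := by
    ext1 ρ
    have h1 : ∑ α, K α * (K α * ρ) = ρ := by simp [← mul_assoc, ← Finset.sum_mul, hsum]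
    have h2 : ∑ α, ρ * K α * K α = ρ := by simp [mul_assoc, ← Finset.mul_sum, hsum]
    simp only [LinearMap.smul_apply, LinearMap.sub_apply, Module.End.one_apply, krausMap_apply,
      LinearMap.sum_apply, LinearMap.comp_apply, LinearMap.mulLeft_apply,
      LinearMap.mulRight_apply, mul_sub, sub_mul, Finset.sum_sub_distrib]
    rw [h1, h2, two_smul]
    simp only [mul_assoc]
    abel
  have htwo : 0 ≤ (2 : ℂ) • (1 - krausMap K) := hsq ▸ Finset.sum_nonneg fun α _ =>
    (LinearMap.nonneg_iff_isPositive _).mpr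
      (isSymmetric_mulLeft_sub_mulRight (hK α)).isPositive_comp_self
  rw [LinearMap.le_def]
  simpa only [smul_smul, one_div, inv_mul_cancel₀ (two_ne_zero (α := ℂ)), one_smul] using
    ((LinearMap.nonneg_iff_isPositive _).mp htwo).smul_of_nonneg (c := (1 / 2 : ℂ))
      (by norm_num [Complex.le_def])

lemma eq_one_of_trace_preserving_of_adjoint {Φ Φstar : Matrix m m ℂ → Matrix m m ℂ}
    (htr : ∀ ρ, (Φ ρ).trace = ρ.trace)
    (hadj : ∀ A B, (Aᴴ * Φ B).trace = ((Φstar A)ᴴ * B).trace) : Φstar 1 = 1 :=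
  ext_inner_right ℂ fun B => by
    rw [inner_eq_trace, inner_eq_trace, ← hadj, conjTranspose_one, one_mul, one_mul, htr]

namespace IsBareChannel

variable {n : ℕ} {Φ : Matrix (Fin n) (Fin n) ℂ → Matrix (Fin n) (Fin n) ℂ}

lemma isRigidContraction (hΦ : IsBareChannel Φ) : IsRigidContraction Φ := by
  obtain ⟨k, K, hK, hsum, rfl⟩ := hΦ.exists_eq_krausMap
  exact LinearMap.isRigidContraction_of_nonneg_of_le_one (krausMap_nonneg hK)
    (krausMap_le_one (fun α => (hK α).isHermitian) hsum)

lemma eq_zero_of_foldl_comp_apply_eq_neg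
    {l : List (Matrix (Fin n) (Fin n) ℂ → Matrix (Fin n) (Fin n) ℂ)}
    (hl : ∀ T ∈ l, IsBareChannel T) {y : Matrix (Fin n) (Fin n) ℂ}
    (hy : l.foldl (fun f g => g ∘ f) id y = -y) : y = 0 :=
  have : IsAddTorsionFree (Matrix (Fin n) (Fin n) ℂ) := .of_module_rat _
  (List.foldl_comp_induction (fun _ _ hf hg => hg.comp hf) l
    (fun T hT => (hl T hT).isRigidContraction) IsRigidContraction.id).eq_zero_of_apply_eq_neg hy

end IsBareChannel

end HilbertSchmidt

theorem stmt_11 (n N : ℕ) (hn : 0 < n)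
    (Φs : Fin N → (Matrix (Fin n) (Fin n) ℂ → Matrix (Fin n) (Fin n) ℂ))
    (hbare : ∀ i, IsBareChannel (Φs i))
    (Φ : Matrix (Fin n) (Fin n) ℂ → Matrix (Fin n) (Fin n) ℂ)
    (hΦ : Φ = (List.ofFn Φs).foldl (fun f g => g ∘ f) id)
    (Φstar : Matrix (Fin n) (Fin n) ℂ → Matrix (Fin n) (Fin n) ℂ)
    (hΦstar : ∀ A B, (Aᴴ * Φ B).trace = ((Φstar A)ᴴ * B).trace) :
    ¬ ∃ U : Matrix (Fin n) (Fin n) ℂ →ₗ[ℂ] Matrix (Fin n) (Fin n) ℂ,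
        Function.Bijective U ∧ ∀ ρ, U (Φstar ρ) = -(Φ (U ρ)) := by
  rintro ⟨U, ⟨hU, -⟩, hUΦ⟩
  have hl : ∀ T ∈ List.ofFn Φs, IsBareChannel T := List.forall_mem_ofFn_iff.mpr hbare
  have hΦstar_one : Φstar 1 = 1 :=
    eq_one_of_trace_preserving_of_adjoint (hΦ ▸ IsBareChannel.trace_foldl_comp_apply hl) hΦstar
  have hU_one : U 1 = 0 := by
    refine IsBareChannel.eq_zero_of_foldl_comp_apply_eq_neg hl ?_
    rw [← hΦ]
    exact neg_eq_iff_eq_neg.mp (hΦstar_one ▸ hUΦ 1).symm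
  have : Nonempty (Fin n) := ⟨⟨0, hn⟩⟩
  exact one_ne_zero (hU (hU_one.trans (map_zero U).symm))
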